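/- (Two-recipient lemma.) Let T=(V,E) be an unweighted tree rooted at u, and let x be an internal node with children y_1,…,y_d at which no candidate is placed. Let F⊆⋃_{i} T_{y_i} be a nonempty set of internal candidates, and let e be the best external candidate, i.e., the minimizer of κ_x(c)=(d(x,c),id(c)) over candidates c∉T_x. Let r_1 be the minimizer of κ_x over F, let y* be the unique child with r_1∈T_{y*}, and let r_2 be the minimizer of κ_x over F\T_{y*} (r_2=⊥ if this set is empty). Then for every child y of x, the best candidate outside T_y from the perspective of any voter in T_y is: either e or r_1 if y≠y*, and either e or r_2 if y=y* (only e if r_2=⊥). In particular, among the internal candidates, only r_1 and r_2 can receive round-1 votes from voters outside their own child subtree of x. -/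

import Mathlib

/-- The preference key of voter `x` for candidate `c`: lexicographic in
(distance, candidate id), smaller preferred. -/
def voterKey {V : Type*} (d : V → V → ℕ) (idv : V → ℕ) (x c : V) : Lex (ℕ × ℕ) :=
  toLex (d x c, idv c)

/-- The subtree `T_x` of a tree with distance function `d` rooted at `u`:
the set of vertices whose unique path from the root `u` passes through `x`. -/
def Subtree {V : Type*} (d : V → V → ℕ) (u x : V) : Set V :=
  {v | d u x + d x v = d u v}

/-- `y` is a child of `x` in the tree `G` rooted at `u`. -/
def IsChild {V : Type*} (G : SimpleGraph V) (u x y : V) : Prop :=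
  G.Adj x y ∧ G.dist u y = G.dist u x + 1

/-!
A voter `v` in the child subtree `T_y` reaches every candidate outside `T_y` through `x`, so
`d(v, c) = d(v, x) + d(x, c)` for all such `c`: on the candidates outside `T_y`, the voter `v`
ranks exactly as `x` does. Hence `v`'s favourite outside `T_y` is `x`'s favourite among the
candidates outside `T_y`, which is `e` or the best internal candidate outside `T_y`; that is
`r₁` unless `y = y*`, in which case it is the best candidate of `F \ T_{y*}`.

In the tree, the edge `x y` splits the vertices into the side of `y` (`d(c, x) = d(c, y) + 1`)
and the side of `x`; a shortest path from a vertex of the first to a vertex of the second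
crosses the edge, which yields the distance decomposition.
-/

namespace SimpleGraph

variable {V : Type*} {G : SimpleGraph V}

lemma Walk.dist_add_dist_of_mem_support {a b w : V} {p : G.Walk a b}
    (hp : p.length = G.dist a b) (hw : w ∈ p.support) :
    G.dist a w + G.dist w b = G.dist a b := by
  classical
  rw [← length_eq_dist_of_subwalk hp (p.isSubwalk_takeUntil hw),
    ← length_eq_dist_of_subwalk hp (p.isSubwalk_dropUntil hw), ← Walk.length_append,
    p.take_spec hw, hp]

namespace IsTree

lemma length_eq_dist_of_isPath (hG : G.IsTree) {a b : V} {p : G.Walk a b} (hp : p.IsPath) :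
    p.length = G.dist a b := by
  obtain ⟨q, hq, hql⟩ := hG.connected.exists_path_of_dist a b
  rw [← hql, (hG.existsUnique_path a b).unique hp hq]

lemma dist_eq_dist_add_one_of_mem_support (hG : G.IsTree) {x y a w : V} (hxy : G.Adj x y)
    (ha : G.dist a x = G.dist a y + 1) {p : G.Walk a y} (hp : p.length = G.dist a y)
    (hw : w ∈ p.support) : G.dist w x = G.dist w y + 1 := by
  have hsplit := Walk.dist_add_dist_of_mem_support hp hw
  have htri : G.dist a x ≤ G.dist a w + G.dist w x := hG.connected.dist_triangle
  have := hG.dist_eq_dist_add_one_of_adj w hxy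
  omega

lemma dist_eq_dist_add_one_add_dist (hG : G.IsTree) {x y a b : V} (hxy : G.Adj x y)
    (ha : G.dist a x = G.dist a y + 1) (hb : G.dist b y = G.dist b x + 1) :
    G.dist a b = G.dist a y + 1 + G.dist x b := by
  obtain ⟨p, hp, hpl⟩ := hG.connected.exists_path_of_dist a y
  obtain ⟨q, hq, hql⟩ := hG.connected.exists_path_of_dist x b
  have hqr : q.reverse.length = G.dist b x := by
    rw [Walk.length_reverse, hql, dist_comm]
  have hpath : (p.append (Walk.cons hxy.symm q)).IsPath := by
    rw [Walk.isPath_def, Walk.support_append, Walk.support_cons, List.tail_cons,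
      List.nodup_append]
    refine ⟨hp.support_nodup, hq.support_nodup, ?_⟩
    rintro w hwp _ hwq rfl
    have hy_side := hG.dist_eq_dist_add_one_of_mem_support hxy ha hpl hwp
    have hx_side := hG.dist_eq_dist_add_one_of_mem_support hxy.symm hb hqr
      (by rwa [Walk.support_reverse, List.mem_reverse])
    omega
  have hlen := hG.length_eq_dist_of_isPath hpath
  rw [Walk.length_append, Walk.length_cons, hpl, hql] at hlen
  omega

end IsTree

end SimpleGraph

open SimpleGraph

section Subtree

variable {V : Type*} {G : SimpleGraph V} {u x y : V}

lemma mem_subtree_iff_of_isChild (hG : G.IsTree) (hy : IsChild G u x y) (c : V) :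
    c ∈ Subtree G.dist u y ↔ G.dist c x = G.dist c y + 1 := by
  have hside := hG.dist_eq_dist_add_one_of_adj c hy.1
  have hxc : G.dist x c = G.dist c x := dist_comm
  have hyc : G.dist y c = G.dist c y := dist_comm
  have huc : G.dist u c = G.dist c u := dist_comm
  have hxu : G.dist x u = G.dist u x := dist_comm
  have hu := hy.2
  simp only [Subtree, Set.mem_ofPred_eq]
  constructor
  · intro hc
    have htri : G.dist u c ≤ G.dist u x + G.dist x c := hG.connected.dist_triangle
    omega
  · intro hc
    have hcu := hG.dist_eq_dist_add_one_add_dist hy.1 hc hu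
    omega

lemma dist_eq_dist_add_dist_of_mem_subtree (hG : G.IsTree) (hy : IsChild G u x y) {v c : V}
    (hv : v ∈ Subtree G.dist u y) (hc : c ∉ Subtree G.dist u y) :
    G.dist v c = G.dist v x + G.dist x c := by
  rw [mem_subtree_iff_of_isChild hG hy] at hv hc
  have hc' : G.dist c y = G.dist c x + 1 := by
    have := hG.dist_eq_dist_add_one_of_adj c hy.1
    omega
  rw [hG.dist_eq_dist_add_one_add_dist hy.1 hv hc', hv]

lemma subtree_subset_subtree_of_isChild (hG : G.IsTree) (hy : IsChild G u x y) :
    Subtree G.dist u y ⊆ Subtree G.dist u x := by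
  intro c hc
  have hcy := (mem_subtree_iff_of_isChild hG hy c).1 hc
  have hxc : G.dist x c = G.dist c x := dist_comm
  have hyc : G.dist y c = G.dist c y := dist_comm
  have hu := hy.2
  simp only [Subtree, Set.mem_ofPred_eq] at hc ⊢
  omega

lemma notMem_subtree_of_isChild_of_ne (hG : G.IsTree) {y' c : V} (hy : IsChild G u x y)
    (hy' : IsChild G u x y') (hne : y ≠ y') (hc : c ∈ Subtree G.dist u y) :
    c ∉ Subtree G.dist u y' := by
  have hy'y : y' ∉ Subtree G.dist u y := by
    intro h
    rw [mem_subtree_iff_of_isChild hG hy, dist_comm, dist_eq_one_iff_adj.2 hy'.1] at h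
    exact hne (hG.connected.dist_eq_zero_iff.1 (by omega)).symm
  have hcy' := dist_eq_dist_add_dist_of_mem_subtree hG hy hc hy'y
  rw [dist_eq_one_iff_adj.2 hy'.1] at hcy'
  rw [mem_subtree_iff_of_isChild hG hy']
  omega

end Subtree

section VoterKey

variable {V : Type*} {d : V → V → ℕ} {idv : V → ℕ}

lemma voterKey_injective (hid : Function.Injective idv) (x : V) :
    Function.Injective (voterKey d idv x) :=
  fun _ _ h => hid (congrArg Prod.snd (toLex.injective h))

lemma voterKey_le_voterKey_iff_of_dist_eq_add {v x c c' : V} {k : ℕ}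
    (hc : d v c = k + d x c) (hc' : d v c' = k + d x c') :
    voterKey d idv v c ≤ voterKey d idv v c' ↔ voterKey d idv x c ≤ voterKey d idv x c' := by
  simp only [voterKey, hc, hc', Prod.Lex.toLex_le_toLex]
  omega

lemma voterKey_le_voterKey_iff_of_mem_subtree {G : SimpleGraph V} (hG : G.IsTree)
    {u x y v c c' : V} (hy : IsChild G u x y) (hv : v ∈ Subtree G.dist u y)
    (hc : c ∉ Subtree G.dist u y) (hc' : c' ∉ Subtree G.dist u y) :
    voterKey G.dist idv v c ≤ voterKey G.dist idv v c' ↔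
      voterKey G.dist idv x c ≤ voterKey G.dist idv x c' :=
  voterKey_le_voterKey_iff_of_dist_eq_add (dist_eq_dist_add_dist_of_mem_subtree hG hy hv hc)
    (dist_eq_dist_add_dist_of_mem_subtree hG hy hv hc')

end VoterKey

theorem two_recipient_lemma_general {V : Type*}
    (G : SimpleGraph V) (hG : G.IsTree)
    (idv : V → ℕ) (hid : Function.Injective idv)
    (u x : V)
    (F : Set V)
    (Eext : Set V) (hEext : ∀ c ∈ Eext, c ∉ Subtree G.dist u x)
    (e : V) (he : e ∈ Eext)
    (hebest : ∀ c ∈ Eext, voterKey G.dist idv x e ≤ voterKey G.dist idv x c)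
    (r₁ : V) (hr₁ : r₁ ∈ F)
    (hr₁best : ∀ c ∈ F, voterKey G.dist idv x r₁ ≤ voterKey G.dist idv x c)
    (ystar : V) (hystar : IsChild G u x ystar) (hr₁mem : r₁ ∈ Subtree G.dist u ystar) :
    ∀ y, IsChild G u x y → ∀ v ∈ Subtree G.dist u y,
      ∀ c ∈ F ∪ Eext, c ∉ Subtree G.dist u y →
        (∀ c' ∈ F ∪ Eext, c' ∉ Subtree G.dist u y →
          voterKey G.dist idv v c ≤ voterKey G.dist idv v c') →
        ((y ≠ ystar → c = e ∨ c = r₁) ∧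
         (y = ystar → c = e ∨
            (c ∈ F ∧ c ∉ Subtree G.dist u ystar ∧
              ∀ c' ∈ F, c' ∉ Subtree G.dist u ystar →
                voterKey G.dist idv x c ≤ voterKey G.dist idv x c'))) := by
  intro y hy v hv c hc hcy hcbest
  have hbest : ∀ c' ∈ F ∪ Eext, c' ∉ Subtree G.dist u y →
      voterKey G.dist idv x c ≤ voterKey G.dist idv x c' := fun c' hc' hc'y =>
    (voterKey_le_voterKey_iff_of_mem_subtree hG hy hv hcy hc'y).1 (hcbest c' hc' hc'y)
  have hkey := voterKey_injective (d := G.dist) hid x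
  have hey : e ∉ Subtree G.dist u y := fun h =>
    hEext e he (subtree_subset_subtree_of_isChild hG hy h)
  have hc_ext : c ∈ Eext → c = e := fun hcE =>
    hkey (le_antisymm (hbest e (.inr he) hey) (hebest c hcE))
  refine ⟨fun hne => ?_, fun hyeq => ?_⟩
  · rcases hc with hcF | hcE
    · have hr₁y := notMem_subtree_of_isChild_of_ne hG hystar hy (Ne.symm hne) hr₁mem
      exact .inr (hkey (le_antisymm (hbest r₁ (.inl hr₁) hr₁y) (hr₁best c hcF)))
    · exact .inl (hc_ext hcE)
  · subst hyeq
    rcases hc with hcF | hcE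
    · exact .inr ⟨hcF, hcy, fun c' hc'F hc'y => hbest c' (.inl hc'F) hc'y⟩
    · exact .inl (hc_ext hcE)

/-- **Two-recipient lemma.**  Root the tree at `u`, let `x` be a node hosting no
candidate, let `F` be a nonempty set of internal candidates lying in child subtrees of
`x`, let `e` be the best external candidate (minimizing `κ_x` over candidates outside
`T_x`), let `r₁` minimize `κ_x` over `F`, let `y*` be the child of `x` whose subtree
contains `r₁`.  Then for every child `y` of `x` and every voter `v ∈ T_y`, any best
candidate outside `T_y` (from `v`'s perspective, among all candidates) is: `e` or `r₁`
if `y ≠ y*`; and `e` or a minimizer `r₂` of `κ_x` over `F \ T_{y*}` if `y = y*`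
(hence only `e` when `F \ T_{y*}` is empty). -/
theorem two_recipient_lemma {V : Type*}
    (G : SimpleGraph V) (hG : G.IsTree)
    (idv : V → ℕ) (hid : Function.Injective idv)
    (u x : V)
    (F : Set V) (hFne : F.Nonempty)
    (hF : ∀ c ∈ F, ∃ y, IsChild G u x y ∧ c ∈ Subtree G.dist u y)
    (Eext : Set V) (hEext : ∀ c ∈ Eext, c ∉ Subtree G.dist u x)
    (e : V) (he : e ∈ Eext)
    (hebest : ∀ c ∈ Eext, voterKey G.dist idv x e ≤ voterKey G.dist idv x c)
    (r₁ : V) (hr₁ : r₁ ∈ F)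
    (hr₁best : ∀ c ∈ F, voterKey G.dist idv x r₁ ≤ voterKey G.dist idv x c)
    (ystar : V) (hystar : IsChild G u x ystar) (hr₁mem : r₁ ∈ Subtree G.dist u ystar) :
    ∀ y, IsChild G u x y → ∀ v ∈ Subtree G.dist u y,
      ∀ c ∈ F ∪ Eext, c ∉ Subtree G.dist u y →
        (∀ c' ∈ F ∪ Eext, c' ∉ Subtree G.dist u y →
          voterKey G.dist idv v c ≤ voterKey G.dist idv v c') →
        ((y ≠ ystar → c = e ∨ c = r₁) ∧
         (y = ystar → c = e ∨
            (c ∈ F ∧ c ∉ Subtree G.dist u ystar ∧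
              ∀ c' ∈ F, c' ∉ Subtree G.dist u ystar →
                voterKey G.dist idv x c ≤ voterKey G.dist idv x c'))) :=
  two_recipient_lemma_general G hG idv hid u x F Eext hEext e he hebest r₁ hr₁ hr₁best ystar hystar
    hr₁mem
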